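/- arXiv:1404.3626 — 2 statements merged into one kernel-verified Lean document; each statement's English description precedes it below -/
import Mathlib

section
/- (Putinar's Positivstellensatz, the engine of the paper's convergence Proposition.) Let f, g_1, …, g_m be real polynomials in n variables. Suppose the Archimedean condition holds: there exist N ∈ ℝ and SOS polynomials τ_0, …, τ_m with N − Σ_{i=1}^n x_i² = τ_0 + Σ_{i=1}^m τ_i·g_i. If f(x) > 0 for every x ∈ S_G, then there exist SOS polynomials σ_0, …, σ_m with f = σ_0 + Σ_{i=1}^m σ_i·g_i. -/
/-!
Jacobi's representation theorem: an Archimedean quadratic module `M` of a real algebra `A`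
contains every `a` with `φ a > 0` for all `φ : A →ₐ[ℝ] ℝ` nonnegative on `M`. If
`-1 ∉ M - ΣA² · a`, Zorn's lemma extends `M - ΣA² · a` to a maximal proper quadratic module,
which is a semiordering `Q`. As `Q` is Archimedean, `a ↦ inf {r | r - a ∈ Q}` is a real point
nonnegative on `Q ∋ -a`, a contradiction. Otherwise `s * a - 1 ∈ M` for a sum of squares `s`,
and a geometric-series certificate turns this into `a ∈ M`.

For polynomials the real points are the points of `ℝⁿ`, and `M` is Archimedean because the
elements bounded by constants form a subalgebra containing the coordinates.
-/

open MvPolynomial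

def IsSOS {n : ℕ} (σ : MvPolynomial (Fin n) ℝ) : Prop :=
  ∃ (k : ℕ) (h : Fin k → MvPolynomial (Fin n) ℝ), σ = ∑ j, h j ^ 2

variable {A : Type*} [CommRing A]

structure IsQuadraticModule (M : Set A) : Prop where
  add_mem {x y : A} : x ∈ M → y ∈ M → x + y ∈ M
  sq_mul_mem (a : A) {x : A} : x ∈ M → a ^ 2 * x ∈ M
  one_mem : 1 ∈ M

def adjoinSumSqMul (M : Set A) (a : A) : Set A :=
  {x | ∃ m ∈ M, ∃ σ, IsSumSq σ ∧ x = m + σ * a}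

theorem subset_adjoinSumSqMul (M : Set A) (a : A) : M ⊆ adjoinSumSqMul M a :=
  fun m hm ↦ ⟨m, hm, 0, .zero, by ring⟩

namespace IsQuadraticModule

theorem sUnion {c : Set (Set A)} (hc : IsChain (· ⊆ ·) c) (hne : c.Nonempty)
    (h : ∀ Q ∈ c, IsQuadraticModule Q) : IsQuadraticModule (⋃₀ c) where
  add_mem := by
    rintro x y ⟨Q₁, hQ₁, hx⟩ ⟨Q₂, hQ₂, hy⟩
    rcases hc.total hQ₁ hQ₂ with h₁₂ | h₂₁
    · exact ⟨Q₂, hQ₂, (h Q₂ hQ₂).add_mem (h₁₂ hx) hy⟩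
    · exact ⟨Q₁, hQ₁, (h Q₁ hQ₁).add_mem hx (h₂₁ hy)⟩
  sq_mul_mem a := by
    rintro x ⟨Q, hQ, hx⟩
    exact ⟨Q, hQ, (h Q hQ).sq_mul_mem a hx⟩
  one_mem := by
    obtain ⟨Q, hQ⟩ := hne
    exact ⟨Q, hQ, (h Q hQ).one_mem⟩

variable {M : Set A} (hM : IsQuadraticModule M)
include hM

theorem zero_mem : 0 ∈ M := by simpa using hM.sq_mul_mem 0 hM.one_mem

theorem isSumSq_mul_mem {σ x : A} (hσ : IsSumSq σ) (hx : x ∈ M) : σ * x ∈ M := by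
  induction hσ using IsSumSq.rec' with
  | zero => simpa using hM.zero_mem
  | sq_add hr _ ih =>
    obtain ⟨r, rfl⟩ := hr
    rw [add_mul, ← sq]
    exact hM.add_mem (hM.sq_mul_mem r hx) ih

theorem isSumSq_mem {σ : A} (hσ : IsSumSq σ) : σ ∈ M := by
  simpa using hM.isSumSq_mul_mem hσ hM.one_mem

theorem sq_mem (a : A) : a ^ 2 ∈ M := hM.isSumSq_mem (IsSquare.sq a).isSumSq

theorem exists_maximal (hM₁ : -1 ∉ M) :
    ∃ Q, M ⊆ Q ∧ Maximal (fun Q ↦ IsQuadraticModule Q ∧ -1 ∉ Q) Q := by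
  refine zorn_subset_nonempty {Q | IsQuadraticModule Q ∧ -1 ∉ Q}
    (fun c hcS hc hne ↦ ⟨⋃₀ c, ⟨?_, ?_⟩, fun Q hQ ↦ Set.subset_sUnion_of_mem hQ⟩)
    M ⟨hM, hM₁⟩
  · exact .sUnion hc hne fun Q hQ ↦ (hcS hQ).1
  · rintro ⟨Q, hQ, h⟩
    exact (hcS hQ).2 h

theorem adjoinSumSqMul (a : A) : IsQuadraticModule (adjoinSumSqMul M a) where
  add_mem := by
    rintro _ _ ⟨m₁, hm₁, σ₁, hσ₁, rfl⟩ ⟨m₂, hm₂, σ₂, hσ₂, rfl⟩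
    exact ⟨m₁ + m₂, hM.add_mem hm₁ hm₂, σ₁ + σ₂, hσ₁.add hσ₂, by ring⟩
  sq_mul_mem b := by
    rintro _ ⟨m, hm, σ, hσ, rfl⟩
    exact ⟨b ^ 2 * m, hM.sq_mul_mem b hm, b ^ 2 * σ, (IsSquare.sq b).isSumSq.mul hσ, by ring⟩
  one_mem := ⟨1, hM.one_mem, 0, .zero, by ring⟩

theorem mem_adjoinSumSqMul_self (a : A) : a ∈ _root_.adjoinSumSqMul M a :=
  ⟨0, hM.zero_mem, 1, .one, by ring⟩

end IsQuadraticModule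

theorem neg_one_mem_adjoinSumSqMul_of_maximal {Q : Set A}
    (hQ : Maximal (fun Q ↦ IsQuadraticModule Q ∧ -1 ∉ Q) Q) {a : A} (ha : a ∉ Q) :
    -1 ∈ adjoinSumSqMul Q a := by
  by_contra h
  exact ha (hQ.2 ⟨hQ.1.1.adjoinSumSqMul a, h⟩ (subset_adjoinSumSqMul Q a)
    (hQ.1.1.mem_adjoinSumSqMul_self a))

def quadraticModuleOf {ι : Type*} [Fintype ι] (g : ι → A) : Set A :=
  {p | ∃ (σ₀ : A) (σ : ι → A),
    IsSumSq σ₀ ∧ (∀ i, IsSumSq (σ i)) ∧ p = σ₀ + ∑ i, σ i * g i}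

theorem isQuadraticModule_quadraticModuleOf {ι : Type*} [Fintype ι] (g : ι → A) :
    IsQuadraticModule (quadraticModuleOf g) where
  add_mem := by
    rintro _ _ ⟨σ₀, σ, hσ₀, hσ, rfl⟩ ⟨τ₀, τ, hτ₀, hτ, rfl⟩
    refine ⟨σ₀ + τ₀, σ + τ, hσ₀.add hτ₀, fun i ↦ (hσ i).add (hτ i), ?_⟩
    simp only [Pi.add_apply, add_mul, Finset.sum_add_distrib]
    ring
  sq_mul_mem a := by
    rintro _ ⟨σ₀, σ, hσ₀, hσ, rfl⟩
    refine ⟨a ^ 2 * σ₀, fun i ↦ a ^ 2 * σ i, (IsSquare.sq a).isSumSq.mul hσ₀,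
      fun i ↦ (IsSquare.sq a).isSumSq.mul (hσ i), ?_⟩
    simp only [mul_add, Finset.mul_sum, mul_assoc]
  one_mem := ⟨1, 0, .one, fun _ ↦ .zero, by simp⟩

theorem apply_mem_quadraticModuleOf {ι : Type*} [Fintype ι] (g : ι → A) (i : ι) :
    g i ∈ quadraticModuleOf g := by
  classical
  refine ⟨0, Pi.single i 1, .zero, fun j ↦ ?_, by simp [Pi.single_apply]⟩
  by_cases h : j = i <;> simp [h, IsSumSq.one, IsSumSq.zero]

section RealAlgebra

variable [Algebra ℝ A]

theorem isSumSq_algebraMap {c : ℝ} (hc : 0 ≤ c) : IsSumSq (algebraMap ℝ A c) := by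
  simpa [← map_pow, Real.sq_sqrt hc] using (IsSquare.sq (algebraMap ℝ A √c)).isSumSq

namespace IsQuadraticModule

variable {M : Set A} (hM : IsQuadraticModule M)
include hM

theorem algebraMap_mul_mem {c : ℝ} (hc : 0 ≤ c) {x : A} (hx : x ∈ M) :
    algebraMap ℝ A c * x ∈ M :=
  hM.isSumSq_mul_mem (isSumSq_algebraMap hc) hx

theorem algebraMap_mem {c : ℝ} (hc : 0 ≤ c) : algebraMap ℝ A c ∈ M := by
  simpa using hM.algebraMap_mul_mem hc hM.one_mem

theorem mem_of_algebraMap_mul_mem {c : ℝ} (hc : 0 < c) {x : A}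
    (hx : algebraMap ℝ A c * x ∈ M) : x ∈ M := by
  simpa [← mul_assoc, ← map_mul, hc.ne'] using hM.algebraMap_mul_mem (inv_nonneg.2 hc.le) hx

theorem algebraMap_sub_mem_of_le {c c' : ℝ} (hcc' : c ≤ c') {x : A}
    (hx : algebraMap ℝ A c - x ∈ M) : algebraMap ℝ A c' - x ∈ M := by
  convert hM.add_mem (hM.algebraMap_mem (sub_nonneg.2 hcc')) hx using 1
  rw [map_sub]; ring

theorem nonneg_of_algebraMap_mem (hM₁ : -1 ∉ M) {c : ℝ} (hc : algebraMap ℝ A c ∈ M) :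
    0 ≤ c := by
  by_contra! hneg
  refine hM₁ (hM.mem_of_algebraMap_mul_mem (neg_pos.2 hneg) ?_)
  simpa using hc

/-- The support `M ∩ -M` is an ideal, since `a = ((a + 1) / 2) ^ 2 - ((a - 1) / 2) ^ 2`. -/
theorem mul_mem_of_mem_of_neg_mem (a : A) {x : A} (hx : x ∈ M) (hnx : -x ∈ M) :
    a * x ∈ M := by
  set h := algebraMap ℝ A (1 / 2)
  have h4 : 4 * h ^ 2 = 1 := by
    rw [← map_pow, ← map_ofNat (algebraMap ℝ A) 4, ← map_mul]; norm_num
  convert hM.add_mem (hM.sq_mul_mem (h * (a + 1)) hx) (hM.sq_mul_mem (h * (a - 1)) hnx) using 1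
  linear_combination (-(a * x)) * h4

/-- `c * (x * y) = x ^ 2 * y + y ^ 2 * x` when `x + y = c`. -/
theorem mul_mem_of_add_eq_algebraMap {x y : A} (hx : x ∈ M) (hy : y ∈ M) {c : ℝ} (hc : 0 < c)
    (hxy : x + y = algebraMap ℝ A c) : x * y ∈ M := by
  refine hM.mem_of_algebraMap_mul_mem hc ?_
  convert hM.add_mem (hM.sq_mul_mem x hy) (hM.sq_mul_mem y hx) using 1
  rw [← hxy]; ring

theorem pow_sub_pow_mem {v : A} (hv : v ∈ M) {d : ℝ} (hd : 0 < d)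
    (hdv : algebraMap ℝ A d - v ∈ M) (i : ℕ) : algebraMap ℝ A d ^ i - v ^ i ∈ M := by
  induction i with
  | zero => simpa using hM.zero_mem
  | succ i ih =>
    have hvi : v ^ i * (algebraMap ℝ A d - v) ∈ M := by
      obtain ⟨j, rfl | rfl⟩ := Nat.even_or_odd' i
      · simpa [pow_mul'] using hM.sq_mul_mem (v ^ j) hdv
      · have := hM.sq_mul_mem (v ^ j)
          (hM.mul_mem_of_add_eq_algebraMap hv hdv hd (add_sub_cancel v _))
        convert this using 1; ring
    convert hM.add_mem (hM.algebraMap_mul_mem hd.le ih) hvi using 1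
    ring

end IsQuadraticModule

structure IsSemiordering (Q : Set A) : Prop extends IsQuadraticModule Q where
  neg_one_notMem : -1 ∉ Q
  mem_or_neg_mem (x : A) : x ∈ Q ∨ -x ∈ Q

theorem isSemiordering_of_maximal {Q : Set A}
    (hQ : Maximal (fun Q ↦ IsQuadraticModule Q ∧ -1 ∉ Q) Q) : IsSemiordering Q := by
  obtain ⟨hQM, hQ₁⟩ := hQ.1
  refine ⟨hQM, hQ₁, fun x ↦ ?_⟩
  by_contra! ⟨hx, hnx⟩
  obtain ⟨q₁, hq₁, s₁, hs₁, h₁⟩ := neg_one_mem_adjoinSumSqMul_of_maximal hQ hx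
  obtain ⟨q₂, hq₂, s₂, hs₂, h₂⟩ := neg_one_mem_adjoinSumSqMul_of_maximal hQ hnx
  have hns₁ : -s₁ ∈ Q := by
    convert hQM.add_mem (hQM.isSumSq_mem hs₂)
      (hQM.add_mem (hQM.isSumSq_mul_mem hs₂ hq₁) (hQM.isSumSq_mul_mem hs₁ hq₂)) using 1
    linear_combination s₂ * h₁ + s₁ * h₂
  refine hQ₁ (h₁ ▸ hQM.add_mem hq₁ ?_)
  rw [mul_comm]
  exact hQM.mul_mem_of_mem_of_neg_mem x (hQM.isSumSq_mem hs₁) hns₁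

def IsArchimedean (M : Set A) : Prop :=
  ∀ a : A, ∃ c : ℝ, algebraMap ℝ A c - a ∈ M

theorem IsArchimedean.mono {M M' : Set A} (hM : IsArchimedean M) (h : M ⊆ M') :
    IsArchimedean M' :=
  fun a ↦ (hM a).imp fun _ hc ↦ h hc

/-- `(1 - a) ^ 2 + (c - a ^ 2) = (c + 1) - 2 * a`. -/
theorem IsQuadraticModule.isArchimedean_of_forall_sq {M : Set A} (hM : IsQuadraticModule M)
    (h : ∀ a : A, ∃ c : ℝ, algebraMap ℝ A c - a ^ 2 ∈ M) : IsArchimedean M := by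
  intro a
  obtain ⟨c, hc⟩ := h a
  refine ⟨(c + 1) / 2, hM.mem_of_algebraMap_mul_mem two_pos ?_⟩
  convert hM.add_mem (hM.sq_mem (1 - a)) hc using 1
  rw [mul_sub, ← map_mul, mul_div_cancel₀ _ two_ne_zero, map_add, map_one, map_ofNat]
  ring

theorem IsQuadraticModule.isArchimedean_of_adjoin_eq_top {M : Set A}
    (hM : IsQuadraticModule M) {s : Set A} (hs : Algebra.adjoin ℝ s = ⊤)
    (h : ∀ x ∈ s, ∃ c : ℝ, algebraMap ℝ A c - x ^ 2 ∈ M) : IsArchimedean M := by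
  refine hM.isArchimedean_of_forall_sq fun a ↦ ?_
  have ha : a ∈ Algebra.adjoin ℝ s := hs ▸ Algebra.mem_top
  induction ha using Algebra.adjoin_induction with
  | mem x hx => exact h x hx
  | algebraMap r => exact ⟨r ^ 2, by simpa using hM.zero_mem⟩
  | add a b _ _ ha hb =>
    obtain ⟨c₁, hc₁⟩ := ha
    obtain ⟨c₂, hc₂⟩ := hb
    refine ⟨2 * c₁ + 2 * c₂, ?_⟩
    convert hM.add_mem (hM.sq_mem (a - b)) (hM.add_mem (hM.algebraMap_mul_mem zero_le_two hc₁)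
      (hM.algebraMap_mul_mem zero_le_two hc₂)) using 1
    simp only [map_add, map_mul, map_ofNat]
    ring
  | mul a b _ _ ha hb =>
    obtain ⟨c₁, hc₁⟩ := ha
    obtain ⟨c₂, hc₂⟩ := hb
    have hc₁' := hM.algebraMap_sub_mem_of_le (le_max_left c₁ 0) hc₁
    refine ⟨max c₁ 0 * c₂, ?_⟩
    convert hM.add_mem (hM.sq_mul_mem b hc₁') (hM.algebraMap_mul_mem (le_max_right c₁ 0) hc₂)
      using 1
    rw [map_mul]
    ring

namespace IsQuadraticModule

variable {M : Set A} (hM : IsQuadraticModule M)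
include hM

/-- If `u * h = 1 - w`, then `t + 2LD + LD² = u h² (u t - 1) + u h² + 2 w (t + L) + w² (L - t)
+ 2L (D - w) + L (D² - w²)`. -/
theorem add_algebraMap_mem_of_mul_eq_one_sub {u h w t : A} {L D : ℝ} (hL : 0 ≤ L)
    (hu : IsSumSq u) (hw : IsSumSq w) (huh : u * h = 1 - w) (hut : u * t - 1 ∈ M)
    (hLt : algebraMap ℝ A L - t ∈ M) (htL : t + algebraMap ℝ A L ∈ M)
    (hDw : algebraMap ℝ A D - w ∈ M) (hDw₂ : algebraMap ℝ A D ^ 2 - w ^ 2 ∈ M) :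
    t + algebraMap ℝ A (2 * L * D + L * D ^ 2) ∈ M := by
  have huh₂ : IsSumSq (u * h ^ 2) := hu.mul (IsSquare.sq h).isSumSq
  have h₁ := hM.add_mem (hM.isSumSq_mul_mem huh₂ hut) (hM.isSumSq_mem huh₂)
  have h₂ := hM.add_mem (hM.isSumSq_mul_mem ((isSumSq_algebraMap zero_le_two).mul hw) htL)
    (hM.sq_mul_mem w hLt)
  have h₃ := hM.add_mem (hM.algebraMap_mul_mem (by positivity : 0 ≤ 2 * L) hDw)
    (hM.algebraMap_mul_mem hL hDw₂)
  convert hM.add_mem h₁ (hM.add_mem h₂ h₃) using 1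
  simp only [map_add, map_mul, map_pow, map_ofNat]
  linear_combination (-(u * h + 1 - w) * t) * huh

theorem exists_pos_bound (harch : IsArchimedean M) (a : A) :
    ∃ l : ℝ, 0 < l ∧ algebraMap ℝ A l - a ∈ M ∧ a + algebraMap ℝ A l ∈ M := by
  obtain ⟨l₁, hl₁⟩ := harch a
  obtain ⟨l₂, hl₂⟩ := harch (-a)
  refine ⟨max (max l₁ l₂) 1, by positivity,
    hM.algebraMap_sub_mem_of_le ((le_max_left _ _).trans (le_max_left _ _)) hl₁, ?_⟩
  simpa [add_comm] using
    hM.algebraMap_sub_mem_of_le ((le_max_right _ _).trans (le_max_left _ _)) hl₂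

/-- With `v = 1 - u` and `d = 1 - 1 / L` we have `0 ≤ v ≤ d < 1` in `M`; the certificate above,
applied to the geometric series `h = ∑_{i < 2j} vⁱ` and `w = v ^ 2j`, has error `O(d ^ 2j)`. -/
theorem add_algebraMap_mem_of_mul_sub_one_mem {u t : A} {L : ℝ} (hL : 1 < L)
    (hu : IsSumSq u) (h1u : 1 - u ∈ M) (hut : u * t - 1 ∈ M)
    (hLt : algebraMap ℝ A L - t ∈ M) (htL : t + algebraMap ℝ A L ∈ M) {ε : ℝ}
    (hε : 0 < ε) :
    t + algebraMap ℝ A ε ∈ M := by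
  set d := 1 - 1 / L
  have hL₀ : 0 < L := one_pos.trans hL
  have hd₀ : 0 < d := sub_pos.2 ((div_lt_one hL₀).2 hL)
  have hd₁ : d < 1 := sub_lt_self 1 (by positivity)
  have hdv : algebraMap ℝ A d - (1 - u) ∈ M := by
    have hinv : algebraMap ℝ A (1 / L) * algebraMap ℝ A L = 1 := by
      rw [← map_mul, one_div_mul_cancel hL₀.ne', map_one]
    convert hM.algebraMap_mul_mem (one_div_nonneg.2 hL₀.le)
      (hM.add_mem hut (hM.isSumSq_mul_mem hu hLt)) using 1
    rw [map_sub, map_one]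
    linear_combination (-u) * hinv
  obtain ⟨j, hj⟩ := exists_pow_lt_of_lt_one (by positivity : 0 < ε / (3 * L)) hd₁
  set D := d ^ (2 * j)
  have hDj : D ≤ d ^ j := pow_le_pow_of_le_one hd₀.le hd₁.le (by omega)
  have hD₂ : D ^ 2 ≤ D :=
    pow_le_of_le_one (by positivity) (hDj.trans (pow_le_one₀ hd₀.le hd₁.le)) two_ne_zero
  have hcert := hM.add_algebraMap_mem_of_mul_eq_one_sub (D := D) hL₀.le hu
    ((even_two_mul j).isSquare_pow (1 - u)).isSumSq
    (by simpa using mul_neg_geom_sum (1 - u) (2 * j)) hut hLt htL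
    (by simpa [D] using hM.pow_sub_pow_mem h1u hd₀ hdv (2 * j))
    (by simpa [D, ← pow_mul] using hM.pow_sub_pow_mem h1u hd₀ hdv (2 * j * 2))
  have hle : 2 * L * D + L * D ^ 2 ≤ ε := by
    have := (lt_div_iff₀ (by positivity : 0 < 3 * L)).1 hj
    nlinarith
  convert hM.add_mem (hM.algebraMap_mem (sub_nonneg.2 hle)) hcert using 1
  rw [map_sub]; ring

/-- Take `u = s / k ≤ 1`, `t = 2 k a - 1` (so `u * t - 1 = 2 (s * a - 1) + (1 - u)`) and `ε = 1`
in `add_algebraMap_mem_of_mul_sub_one_mem`. -/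
theorem mem_of_isSumSq_mul_sub_one_mem (harch : IsArchimedean M) {s a : A} (hs : IsSumSq s)
    (hsa : s * a - 1 ∈ M) : a ∈ M := by
  obtain ⟨k, hk, hks, -⟩ := hM.exists_pos_bound harch s
  obtain ⟨l, hl, hla, hal⟩ := hM.exists_pos_bound harch a
  have hinv : algebraMap ℝ A (1 / k) * algebraMap ℝ A k = 1 := by
    rw [← map_mul, one_div_mul_cancel hk.ne', map_one]
  set u := algebraMap ℝ A (1 / k) * s
  set t := algebraMap ℝ A (2 * k) * a - 1
  have h1u : 1 - u ∈ M := by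
    convert hM.algebraMap_mul_mem (one_div_nonneg.2 hk.le) hks using 1
    linear_combination -hinv
  have hut : u * t - 1 ∈ M := by
    convert hM.add_mem (hM.algebraMap_mul_mem zero_le_two hsa) h1u using 1
    simp only [u, t, map_mul, map_ofNat]
    linear_combination (2 * s * a) * hinv
  have hLt : algebraMap ℝ A (2 * k * l + 2) - t ∈ M := by
    convert hM.add_mem (hM.algebraMap_mul_mem (by positivity : 0 ≤ 2 * k) hla)
      (hM.algebraMap_mem (by norm_num : (0 : ℝ) ≤ 3)) using 1
    simp only [t, map_add, map_mul, map_ofNat]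
    ring
  have htL : t + algebraMap ℝ A (2 * k * l + 2) ∈ M := by
    convert hM.add_mem (hM.algebraMap_mul_mem (by positivity : 0 ≤ 2 * k) hal) hM.one_mem using 1
    simp only [t, map_add, map_mul, map_ofNat]
    ring
  refine hM.mem_of_algebraMap_mul_mem (by positivity : 0 < 2 * k) ?_
  simpa [t] using hM.add_algebraMap_mem_of_mul_sub_one_mem (by nlinarith)
    ((isSumSq_algebraMap (one_div_nonneg.2 hk.le)).mul hs) h1u hut hLt htL one_pos

end IsQuadraticModule

/-- For an Archimedean semiordering `Q`, the real number that `a` is infinitely close to;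
otherwise the set may be empty or unbounded below and `sInf` gives the junk value `0`. -/
noncomputable def semiorderingValue (Q : Set A) (a : A) : ℝ :=
  sInf {r : ℝ | algebraMap ℝ A r - a ∈ Q}

namespace IsSemiordering

variable {Q : Set A} (hQ : IsSemiordering Q)
include hQ

theorem le_of_sub_mem_of_sub_mem {a : A} {r r' : ℝ} (hr : algebraMap ℝ A r - a ∈ Q)
    (hr' : a - algebraMap ℝ A r' ∈ Q) : r' ≤ r := by
  have := hQ.nonneg_of_algebraMap_mem hQ.neg_one_notMem (c := r - r') (by
    convert hQ.add_mem hr hr' using 1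
    rw [map_sub]; ring)
  linarith

variable (harch : IsArchimedean Q)
include harch

theorem semiorderingValue_le {a : A} {r : ℝ} (h : algebraMap ℝ A r - a ∈ Q) :
    semiorderingValue Q a ≤ r := by
  obtain ⟨c, hc⟩ := harch (-a)
  refine csInf_le ⟨-c, fun r' hr' ↦ hQ.le_of_sub_mem_of_sub_mem hr' ?_⟩ h
  simpa [sub_neg_eq_add, add_comm] using hc

theorem sub_mem_of_semiorderingValue_lt {a : A} {r : ℝ} (h : semiorderingValue Q a < r) :
    algebraMap ℝ A r - a ∈ Q := by
  obtain ⟨r', hr', hr'r⟩ := exists_lt_of_csInf_lt (harch a) h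
  exact hQ.algebraMap_sub_mem_of_le hr'r.le hr'

theorem le_semiorderingValue {a : A} {r : ℝ} (h : a - algebraMap ℝ A r ∈ Q) :
    r ≤ semiorderingValue Q a := by
  refine le_of_forall_pos_le_add fun ε hε ↦ hQ.le_of_sub_mem_of_sub_mem ?_ h
  exact hQ.sub_mem_of_semiorderingValue_lt harch (lt_add_of_pos_right _ hε)

theorem sub_mem_of_lt_semiorderingValue {a : A} {r : ℝ} (h : r < semiorderingValue Q a) :
    a - algebraMap ℝ A r ∈ Q := by
  rcases hQ.mem_or_neg_mem (algebraMap ℝ A r - a) with hr | hr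
  · exact absurd (hQ.semiorderingValue_le harch hr) h.not_ge
  · rwa [neg_sub] at hr

theorem semiorderingValue_eq {a : A} {r : ℝ}
    (h : ∀ ε > 0, algebraMap ℝ A (r + ε) - a ∈ Q ∧ a - algebraMap ℝ A (r - ε) ∈ Q) :
    semiorderingValue Q a = r := by
  refine le_antisymm (le_of_forall_pos_le_add fun ε hε ↦ ?_)
    (le_of_forall_pos_le_add fun ε hε ↦ ?_)
  · exact hQ.semiorderingValue_le harch (h ε hε).1
  · linarith [hQ.le_semiorderingValue harch (h ε hε).2]

theorem semiorderingValue_add (a b : A) :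
    semiorderingValue Q (a + b) = semiorderingValue Q a + semiorderingValue Q b := by
  refine hQ.semiorderingValue_eq harch fun ε hε ↦ ⟨?_, ?_⟩
  · convert hQ.add_mem
      (hQ.sub_mem_of_semiorderingValue_lt harch (lt_add_of_pos_right (semiorderingValue Q a)
        (half_pos hε)))
      (hQ.sub_mem_of_semiorderingValue_lt harch (lt_add_of_pos_right (semiorderingValue Q b)
        (half_pos hε))) using 1
    rw [show semiorderingValue Q a + semiorderingValue Q b + ε =
      (semiorderingValue Q a + ε / 2) + (semiorderingValue Q b + ε / 2) by ring, map_add]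
    ring
  · convert hQ.add_mem
      (hQ.sub_mem_of_lt_semiorderingValue harch (sub_lt_self (semiorderingValue Q a)
        (half_pos hε)))
      (hQ.sub_mem_of_lt_semiorderingValue harch (sub_lt_self (semiorderingValue Q b)
        (half_pos hε))) using 1
    rw [show semiorderingValue Q a + semiorderingValue Q b - ε =
      (semiorderingValue Q a - ε / 2) + (semiorderingValue Q b - ε / 2) by ring, map_add]
    ring

theorem semiorderingValue_neg (a : A) : semiorderingValue Q (-a) = -semiorderingValue Q a := by
  refine hQ.semiorderingValue_eq harch fun ε hε ↦ ⟨?_, ?_⟩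
  · convert hQ.sub_mem_of_lt_semiorderingValue harch (sub_lt_self (semiorderingValue Q a) hε)
      using 1
    rw [map_add, map_neg, map_sub]; ring
  · convert hQ.sub_mem_of_semiorderingValue_lt harch
      (lt_add_of_pos_right (semiorderingValue Q a) hε) using 1
    rw [map_sub, map_neg, map_add]; ring

theorem semiorderingValue_algebraMap (c : ℝ) : semiorderingValue Q (algebraMap ℝ A c) = c :=
  hQ.semiorderingValue_eq harch fun ε hε ↦ by
    simpa [map_add, map_sub] using hQ.algebraMap_mem hε.le

theorem semiorderingValue_sub (a b : A) :
    semiorderingValue Q (a - b) = semiorderingValue Q a - semiorderingValue Q b := by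
  rw [sub_eq_add_neg, hQ.semiorderingValue_add harch, hQ.semiorderingValue_neg harch,
    ← sub_eq_add_neg]

theorem semiorderingValue_algebraMap_mul_of_pos {c : ℝ} (hc : 0 < c) (a : A) :
    semiorderingValue Q (algebraMap ℝ A c * a) = c * semiorderingValue Q a := by
  refine hQ.semiorderingValue_eq harch fun ε hε ↦ ⟨?_, ?_⟩
  · convert hQ.algebraMap_mul_mem hc.le (hQ.sub_mem_of_semiorderingValue_lt harch
      (lt_add_of_pos_right (semiorderingValue Q a) (div_pos hε hc))) using 1
    rw [mul_sub, ← map_mul, mul_add, mul_div_cancel₀ _ hc.ne']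
  · convert hQ.algebraMap_mul_mem hc.le (hQ.sub_mem_of_lt_semiorderingValue harch
      (sub_lt_self (semiorderingValue Q a) (div_pos hε hc))) using 1
    rw [mul_sub, ← map_mul, mul_sub, mul_div_cancel₀ _ hc.ne']

theorem semiorderingValue_algebraMap_mul (c : ℝ) (a : A) :
    semiorderingValue Q (algebraMap ℝ A c * a) = c * semiorderingValue Q a := by
  rcases lt_trichotomy c 0 with hc | rfl | hc
  · rw [show algebraMap ℝ A c * a = algebraMap ℝ A (-c) * -a by rw [map_neg]; ring,
      hQ.semiorderingValue_algebraMap_mul_of_pos harch (neg_pos.2 hc),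
      hQ.semiorderingValue_neg harch]
    ring
  · simpa using hQ.semiorderingValue_algebraMap harch 0
  · exact hQ.semiorderingValue_algebraMap_mul_of_pos harch hc a

/-- For `ε > 0`, `(c + ε) ^ 2 (ε - c) + (c - ε) ^ 2 (c + ε) = 2 ε (ε ^ 2 - c ^ 2)`. -/
theorem semiorderingValue_sq_eq_zero {c : A} (hc : semiorderingValue Q c = 0) :
    semiorderingValue Q (c ^ 2) = 0 := by
  refine le_antisymm (le_of_forall_pos_le_add fun δ hδ ↦ ?_)
    (hQ.le_semiorderingValue harch (by simpa using hQ.sq_mem c))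
  set ε := √δ
  have hε : 0 < ε := Real.sqrt_pos.2 hδ
  have h₁ : algebraMap ℝ A ε - c ∈ Q := hQ.sub_mem_of_semiorderingValue_lt harch (hc ▸ hε)
  have h₂ : c - algebraMap ℝ A (-ε) ∈ Q :=
    hQ.sub_mem_of_lt_semiorderingValue harch (hc ▸ neg_neg_of_pos hε)
  have h₃ : algebraMap ℝ A (ε ^ 2) - c ^ 2 ∈ Q := by
    refine hQ.mem_of_algebraMap_mul_mem (by positivity : 0 < 2 * ε) ?_
    convert hQ.add_mem (hQ.sq_mul_mem (c + algebraMap ℝ A ε) h₁)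
      (hQ.sq_mul_mem (c - algebraMap ℝ A ε) h₂) using 1
    simp only [map_mul, map_pow, map_neg, map_ofNat]
    ring
  simpa [ε, Real.sq_sqrt hδ.le] using hQ.semiorderingValue_le harch h₃

theorem semiorderingValue_sq (a : A) :
    semiorderingValue Q (a ^ 2) = semiorderingValue Q a ^ 2 := by
  set r := semiorderingValue Q a
  have hc : semiorderingValue Q (a - algebraMap ℝ A r) = 0 := by
    rw [hQ.semiorderingValue_sub harch, hQ.semiorderingValue_algebraMap harch, sub_self]
  have ha : a ^ 2 = (a - algebraMap ℝ A r) ^ 2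
      + algebraMap ℝ A (2 * r) * (a - algebraMap ℝ A r) + algebraMap ℝ A (r ^ 2) := by
    simp only [map_mul, map_pow, map_ofNat]
    ring
  rw [ha, hQ.semiorderingValue_add harch, hQ.semiorderingValue_add harch,
    hQ.semiorderingValue_sq_eq_zero harch hc, hQ.semiorderingValue_algebraMap_mul harch, hc,
    hQ.semiorderingValue_algebraMap harch]
  ring

theorem semiorderingValue_mul (a b : A) :
    semiorderingValue Q (a * b) = semiorderingValue Q a * semiorderingValue Q b := by
  have hab : a * b = algebraMap ℝ A (1 / 4) * ((a + b) ^ 2 - (a - b) ^ 2) := by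
    have : algebraMap ℝ A (1 / 4) * 4 = 1 := by
      rw [← map_ofNat (algebraMap ℝ A) 4, ← map_mul]; norm_num
    linear_combination (-(a * b)) * this
  rw [hab, hQ.semiorderingValue_algebraMap_mul harch, hQ.semiorderingValue_sub harch,
    hQ.semiorderingValue_sq harch, hQ.semiorderingValue_sq harch,
    hQ.semiorderingValue_add harch, hQ.semiorderingValue_sub harch]
  ring

noncomputable def toAlgHom : A →ₐ[ℝ] ℝ where
  toFun := semiorderingValue Q
  map_one' := by simpa using hQ.semiorderingValue_algebraMap harch 1
  map_mul' := hQ.semiorderingValue_mul harch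
  map_zero' := by simpa using hQ.semiorderingValue_algebraMap harch 0
  map_add' := hQ.semiorderingValue_add harch
  commutes' := hQ.semiorderingValue_algebraMap harch

theorem toAlgHom_nonneg {a : A} (ha : a ∈ Q) : 0 ≤ hQ.toAlgHom harch a :=
  hQ.le_semiorderingValue harch (by simpa using ha)

end IsSemiordering

theorem IsQuadraticModule.mem_of_forall_algHom_pos {M : Set A} (hM : IsQuadraticModule M)
    (harch : IsArchimedean M) {a : A}
    (ha : ∀ φ : A →ₐ[ℝ] ℝ, (∀ x ∈ M, 0 ≤ φ x) → 0 < φ a) :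
    a ∈ M := by
  by_cases h : -1 ∈ _root_.adjoinSumSqMul M (-a)
  · obtain ⟨m, hm, σ, hσ, hm'⟩ := h
    refine hM.mem_of_isSumSq_mul_sub_one_mem harch hσ ?_
    convert hm using 1
    linear_combination hm'
  · obtain ⟨Q, hMQ, hQ⟩ := (hM.adjoinSumSqMul (-a)).exists_maximal h
    have hQ' := isSemiordering_of_maximal hQ
    have hMQ' := (subset_adjoinSumSqMul M (-a)).trans hMQ
    have hQarch := harch.mono hMQ'
    have hpos := ha (hQ'.toAlgHom hQarch) fun x hx ↦ hQ'.toAlgHom_nonneg hQarch (hMQ' hx)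
    have hneg := hQ'.toAlgHom_nonneg hQarch (hMQ (hM.mem_adjoinSumSqMul_self (-a)))
    rw [map_neg] at hneg
    linarith

end RealAlgebra

theorem isSOS_iff_isSumSq {n : ℕ} {σ : MvPolynomial (Fin n) ℝ} : IsSOS σ ↔ IsSumSq σ := by
  constructor
  · rintro ⟨k, h, rfl⟩
    exact IsSumSq.sum_sq _ _
  · intro hσ
    induction hσ using IsSumSq.rec' with
    | zero => exact ⟨0, ![], by simp⟩
    | sq_add hx _ ih =>
      obtain ⟨r, rfl⟩ := hx
      obtain ⟨k, h, rfl⟩ := ih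
      exact ⟨k + 1, Fin.cons r h, by simp [Fin.sum_univ_succ, sq]⟩

theorem MvPolynomial.isArchimedean_of_sub_sum_sq_mem {σ : Type*} [Fintype σ]
    {M : Set (MvPolynomial σ ℝ)} (hM : IsQuadraticModule M) {N : ℝ}
    (hN : C N - ∑ i, X i ^ 2 ∈ M) : IsArchimedean M := by
  classical
  refine hM.isArchimedean_of_adjoin_eq_top adjoin_range_X ?_
  rintro _ ⟨i, rfl⟩
  refine ⟨N, ?_⟩
  convert hM.add_mem hN (hM.isSumSq_mem (IsSumSq.sum_sq (Finset.univ.erase i) X)) using 1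
  rw [← Finset.add_sum_erase _ _ (Finset.mem_univ i), algebraMap_eq]
  ring

theorem MvPolynomial.algHom_apply_eq_eval {σ : Type*} (φ : MvPolynomial σ ℝ →ₐ[ℝ] ℝ)
    (p : MvPolynomial σ ℝ) : φ p = eval (φ ∘ X) p := by
  rw [← coe_aeval_eq_eval, ← aeval_unique]
  rfl

/-- Putinar's Positivstellensatz: under the Archimedean condition
(`N − Σ xᵢ²` lies in the quadratic module generated by the `gᵢ`), every polynomial `f`
strictly positive on `S_G` lies in the quadratic module, i.e.
`f = σ₀ + Σ σᵢ·gᵢ` with all `σ`'s SOS. -/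
theorem putinar_positivstellensatz {n m : ℕ}
    (f : MvPolynomial (Fin n) ℝ) (g : Fin m → MvPolynomial (Fin n) ℝ)
    (harch : ∃ (N : ℝ) (τ₀ : MvPolynomial (Fin n) ℝ)
        (τ : Fin m → MvPolynomial (Fin n) ℝ),
      IsSOS τ₀ ∧ (∀ i, IsSOS (τ i)) ∧
      C N - ∑ i : Fin n, X i ^ 2 = τ₀ + ∑ i, τ i * g i)
    (hpos : ∀ x : Fin n → ℝ, (∀ i, 0 ≤ eval x (g i)) → 0 < eval x f) :
    ∃ (σ₀ : MvPolynomial (Fin n) ℝ) (σ : Fin m → MvPolynomial (Fin n) ℝ),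
      IsSOS σ₀ ∧ (∀ i, IsSOS (σ i)) ∧ f = σ₀ + ∑ i, σ i * g i := by
  obtain ⟨N, τ₀, τ, hτ₀, hτ, hN⟩ := harch
  have hM := isQuadraticModule_quadraticModuleOf g
  have hMarch : IsArchimedean (quadraticModuleOf g) := isArchimedean_of_sub_sum_sq_mem hM
    ⟨τ₀, τ, isSOS_iff_isSumSq.1 hτ₀, fun i ↦ isSOS_iff_isSumSq.1 (hτ i), hN⟩
  have hf : f ∈ quadraticModuleOf g := hM.mem_of_forall_algHom_pos hMarch fun φ hφ ↦ by
    rw [algHom_apply_eq_eval]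
    exact hpos _ fun i ↦ algHom_apply_eq_eval φ (g i) ▸ hφ _ (apply_mem_quadraticModuleOf g i)
  obtain ⟨σ₀, σ, hσ₀, hσ, hfσ⟩ := hf
  exact ⟨σ₀, σ, isSOS_iff_isSumSq.2 hσ₀, fun i ↦ isSOS_iff_isSumSq.2 (hσ i), hfσ⟩
end

section
/- (Proposition 2: sparse order-1 relaxation is equivalent to the dense order-1 relaxation for the quadratic formulation.) Let f, g_1, …, g_m be real polynomials in n variables of total degree at most 2. Let I_1, …, I_p ⊆ {1,…,n} cover {1,…,n}, satisfy the running intersection property (for each k ≥ 2 there is s(k) < k with I_k ∩ (I_1 ∪ … ∪ I_{k−1}) ⊆ I_{s(k)}), and be such that every monomial of f and every constraint g_i is supported on some I_k. Then the supremum of φ ∈ ℝ admitting a dense order-1 certificate f − φ = σ_0 + Σ_i λ_i·g_i (σ_0 SOS of degree ≤ 2, λ_i ≥ 0 real constants) equals the supremum of φ ∈ ℝ admitting a sparse order-1 certificate f − φ = Σ_{k=1}^p σ_k + Σ_i λ_i·g_i (each σ_k SOS of degree ≤ 2 supported on I_k, λ_i ≥ 0 real constants). Hence [OP_2-SH_1]*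 is equivalent to [OP_2-H_1]* and thus to the Lavaei–Low dual SDP relaxation. -/
open MvPolynomial

/-!
A sum of squares of degree at most 2 is a sum of squares of affine polynomials, hence a Gram form
`∑ i j, ⟪r i, r j⟫ xᵢ xⱼ` in the affine monomials `x₀ = 1, x₁, …, xₙ`. The coefficients of the form
determine its Gram matrix, so when every monomial lies in a clique, `⟪r i, r j⟫ ≠ 0` only for
indices sharing a clique. Such a Gram family decomposes along the cliques: project orthogonally
onto the span of the vectors of the variables that occur only in the last clique; this splits off a
Gram summand supported on the last clique, and by the running intersection property the residual
family is supported on the earlier cliques. The SOS multiplier of a dense certificate is therefore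
already a sum of clique-supported SOS, and the two sets of bounds coincide.
-/

open RealInnerProductSpace

lemma IsSOS.add {n : ℕ} {a b : MvPolynomial (Fin n) ℝ} (ha : IsSOS a) (hb : IsSOS b) :
    IsSOS (a + b) := by
  obtain ⟨k, f, rfl⟩ := ha
  obtain ⟨l, g, rfl⟩ := hb
  exact ⟨k + l, Fin.append f g, by simp [Fin.sum_univ_add]⟩

lemma IsSOS.sum {n : ℕ} {ι : Type*} (s : Finset ι) {f : ι → MvPolynomial (Fin n) ℝ}
    (h : ∀ i ∈ s, IsSOS (f i)) : IsSOS (∑ i ∈ s, f i) :=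
  Finset.sum_induction _ _ (fun _ _ => IsSOS.add) ⟨0, Fin.elim0, by simp⟩ h

lemma IsSOS.eval_nonneg {n : ℕ} {s : MvPolynomial (Fin n) ℝ} (hs : IsSOS s) (x : Fin n → ℝ) :
    0 ≤ eval x s := by
  obtain ⟨k, h, rfl⟩ := hs
  simpa using Finset.sum_nonneg fun j _ => sq_nonneg (eval x (h j))

section Degree

lemma MvPolynomial.homogeneousComponent_mul_of_totalDegree_le {σ R : Type*} [CommSemiring R]
    {p q : MvPolynomial σ R} {a b : ℕ} (hp : p.totalDegree ≤ a) (hq : q.totalDegree ≤ b) :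
    homogeneousComponent (a + b) (p * q) = homogeneousComponent a p * homogeneousComponent b q := by
  classical
  ext d
  simp only [coeff_homogeneousComponent, coeff_mul]
  split_ifs with hd
  · refine Finset.sum_congr rfl fun x hx => ?_
    have hdeg : x.1.degree + x.2.degree = a + b := by
      rw [← map_add, Finset.HasAntidiagonal.mem_antidiagonal.mp hx, hd]
    by_cases h1 : coeff x.1 p = 0
    · simp [h1]
    by_cases h2 : coeff x.2 q = 0
    · simp [h2]
    have : x.1.degree ≤ p.totalDegree := le_totalDegree (mem_support_iff.mpr h1)
    have : x.2.degree ≤ q.totalDegree := le_totalDegree (mem_support_iff.mpr h2)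
    rw [if_pos (by omega), if_pos (by omega)]
  · refine (Finset.sum_eq_zero fun x hx => ?_).symm
    have hdeg : x.1.degree + x.2.degree = d.degree := by
      rw [← map_add, Finset.HasAntidiagonal.mem_antidiagonal.mp hx]
    split_ifs <;> first | omega | simp

lemma MvPolynomial.homogeneousComponent_totalDegree_ne_zero {σ R : Type*} [CommSemiring R]
    {p : MvPolynomial σ R} (hp : p ≠ 0) : homogeneousComponent p.totalDegree p ≠ 0 := by
  obtain ⟨d, hd, hdeg⟩ : ∃ d ∈ p.support, p.totalDegree = d.degree :=
    Finset.exists_mem_eq_sup _ (support_nonempty.mpr hp) _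
  refine ne_of_apply_ne (coeff d) ?_
  rw [coeff_homogeneousComponent, if_pos hdeg.symm, coeff_zero]
  exact mem_support_iff.mp hd

/-- The top homogeneous components of the `h j ^ 2` cannot cancel, being sums of squares. -/
lemma MvPolynomial.two_mul_totalDegree_le_totalDegree_sum_sq {ι σ : Type*} [Fintype ι]
    (h : ι → MvPolynomial σ ℝ) (j : ι) :
    2 * (h j).totalDegree ≤ (∑ j, h j ^ 2).totalDegree := by
  obtain ⟨j₀, -, hj₀⟩ := Finset.univ.exists_max_image (fun j => (h j).totalDegree)
    ⟨j, Finset.mem_univ _⟩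
  set D := (h j₀).totalDegree
  have hle : ∀ j, (h j).totalDegree ≤ D := fun j => hj₀ j (Finset.mem_univ _)
  calc 2 * (h j).totalDegree ≤ D + D := by linarith [hle j]
    _ ≤ _ := by
      rcases eq_or_ne (h j₀) 0 with h0 | h0
      · simp [D, h0]
      by_contra! hlt
      have top : homogeneousComponent (D + D) (∑ j, h j ^ 2)
          = ∑ j, homogeneousComponent D (h j) ^ 2 := by
        simp only [map_sum, sq, homogeneousComponent_mul_of_totalDegree_le (hle _) (hle _)]
      obtain ⟨x, hx⟩ : ∃ x, eval x (homogeneousComponent D (h j₀)) ≠ 0 := by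
        by_contra! hx
        exact homogeneousComponent_totalDegree_ne_zero h0 (MvPolynomial.funext (by simpa using hx))
      have hsum := congrArg (eval x) (top.symm.trans (homogeneousComponent_eq_zero _ _ hlt))
      simp only [map_sum, map_pow, map_zero] at hsum
      exact hx (pow_eq_zero_iff two_ne_zero |>.mp <|
        (Finset.sum_eq_zero_iff_of_nonneg fun j _ => sq_nonneg _).mp hsum j₀ (Finset.mem_univ _))

end Degree

section Chordal

open Submodule

variable {ι E : Type*} [NormedAddCommGroup E] [InnerProductSpace ℝ E]

def RunningIntersection {p : ℕ} (J : Fin p → Set ι) : Prop :=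
  ∀ k : Fin p, (k : ℕ) ≠ 0 → ∃ s < k, ∀ i ∈ J k, (∃ l < k, i ∈ J l) → i ∈ J s

def GramSupportedOn {p : ℕ} (r : ι → E) (J : Fin p → Set ι) : Prop :=
  ∀ i j, ⟪r i, r j⟫ ≠ 0 → ∃ k, i ∈ J k ∧ j ∈ J k

lemma RunningIntersection.castSucc {p : ℕ} {J : Fin (p + 1) → Set ι}
    (h : RunningIntersection J) : RunningIntersection (J ∘ Fin.castSucc) := by
  intro k hk
  obtain ⟨s, hs, hsJ⟩ := h k.castSucc hk
  refine ⟨s.castLT (lt_trans (α := ℕ) hs k.isLt), hs, fun i hi ⟨l, hl, hil⟩ => ?_⟩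
  simpa using hsJ i hi ⟨l.castSucc, hl, hil⟩

lemma inner_starProjection_add_inner_sub_starProjection (K : Submodule ℝ E)
    [K.HasOrthogonalProjection] (x y : E) :
    ⟪K.starProjection x, K.starProjection y⟫ + ⟪x - K.starProjection x, y - K.starProjection y⟫
      = ⟪x, y⟫ := by
  have hx := K.starProjection_inner_eq_zero x (K.starProjection y) (K.starProjection_apply_mem y)
  have hy := K.starProjection_inner_eq_zero y (K.starProjection x) (K.starProjection_apply_mem x)
  rw [real_inner_comm] at hy
  simp only [inner_sub_left, inner_sub_right] at hx hy ⊢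
  linarith

def privateSpan {p : ℕ} (r : ι → E) (J : Fin p → Set ι) (k₀ : Fin p) : Submodule ℝ E :=
  span ℝ (r '' {a | ∀ k, a ∈ J k → k = k₀})

lemma GramSupportedOn.starProjection_privateSpan_eq_zero {p : ℕ} {r : ι → E}
    {J : Fin p → Set ι} {k₀ : Fin p} [(privateSpan r J k₀).HasOrthogonalProjection]
    (hr : GramSupportedOn r J) {i : ι} (hi : i ∉ J k₀) :
    (privateSpan r J k₀).starProjection (r i) = 0 := by
  rw [starProjection_apply_eq_zero_iff]
  refine isOrtho_span.mpr ?_ (subset_span rfl)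
  rintro _ rfl _ ⟨a, ha, rfl⟩
  by_contra hia
  obtain ⟨k, hik, hak⟩ := hr i a hia
  exact hi (ha k hak ▸ hik)

variable [FiniteDimensional ℝ E]

lemma GramSupportedOn.exists_split_last {p : ℕ} {r : ι → E} {J : Fin (p + 1) → Set ι}
    (hr : GramSupportedOn r J) (hrip : RunningIntersection J) :
    ∃ q r' : ι → E, (∀ i ∉ J (Fin.last p), q i = 0) ∧ GramSupportedOn r' (J ∘ Fin.castSucc) ∧
      ∀ i j, ⟪q i, q j⟫ + ⟪r' i, r' j⟫ = ⟪r i, r j⟫ := by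
  set π := (privateSpan r J (Fin.last p)).starProjection
  have hsplit := inner_starProjection_add_inner_sub_starProjection (privateSpan r J (Fin.last p))
  refine ⟨fun i => π (r i), fun i => r i - π (r i), fun i => hr.starProjection_privateSpan_eq_zero,
    ?_, fun i j => hsplit _ _⟩
  have earlier : ∀ a, r a - π (r a) ≠ 0 → ∃ l < Fin.last p, a ∈ J l := by
    intro a ha
    by_contra! hpriv
    refine ha (sub_eq_zero.mpr (starProjection_eq_self_iff.mpr (subset_span ?_)).symm)
    refine Set.mem_image_of_mem r fun k hak => ?_
    exact (Fin.le_last k).eq_or_lt.resolve_right fun hk => hpriv k hk hak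
  have outside : ∀ i j, i ∉ J (Fin.last p) → ⟪r i - π (r i), r j - π (r j)⟫ ≠ 0 →
      ∃ k : Fin p, i ∈ J k.castSucc ∧ j ∈ J k.castSucc := by
    intro i j hi hij
    have h := hsplit (r i) (r j)
    rw [hr.starProjection_privateSpan_eq_zero hi, inner_zero_left, zero_add, sub_zero] at h
    rw [hr.starProjection_privateSpan_eq_zero hi, sub_zero, h] at hij
    obtain ⟨k, hik, hjk⟩ := hr i j hij
    obtain ⟨k, rfl⟩ := (Fin.exists_castSucc_eq (i := k)).mpr (by rintro rfl; exact hi hik)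
    exact ⟨k, hik, hjk⟩
  intro i j hij
  beta_reduce at hij
  by_cases hi : i ∈ J (Fin.last p)
  · by_cases hj : j ∈ J (Fin.last p)
    · obtain ⟨l, hl, hil⟩ := earlier i fun h => hij (by rw [h, inner_zero_left])
      obtain ⟨s, hs, hsJ⟩ := hrip (Fin.last p) ((Nat.zero_le _).trans_lt hl).ne'
      obtain ⟨s, rfl⟩ := (Fin.exists_castSucc_eq (i := s)).mpr hs.ne
      exact ⟨s, hsJ i hi ⟨l, hl, hil⟩,
        hsJ j hj (earlier j fun h => hij (by rw [h, inner_zero_right]))⟩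
    · obtain ⟨k, hjk, hik⟩ := outside j i hj (by rwa [real_inner_comm])
      exact ⟨k, hik, hjk⟩
  · exact outside i j hi hij

theorem GramSupportedOn.exists_decomposition :
    ∀ {p : ℕ} {r : ι → E} {J : Fin p → Set ι}, GramSupportedOn r J → RunningIntersection J →
      ∃ q : Fin p → ι → E, (∀ k, ∀ i ∉ J k, q k i = 0) ∧
        ∀ i j, ∑ k, ⟪q k i, q k j⟫ = ⟪r i, r j⟫
  | 0, r, J, hr, _ => ⟨Fin.elim0, fun k => k.elim0, fun i j => by
      by_contra h
      exact (hr i j (Ne.symm (by simpa using h))).choose.elim0⟩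
  | p + 1, r, J, hr, hrip => by
    obtain ⟨q, r', hq, hr', hsplit⟩ := hr.exists_split_last hrip
    obtain ⟨Q, hQ, hQsum⟩ := hr'.exists_decomposition hrip.castSucc
    refine ⟨Fin.snoc Q q, fun k => ?_, fun i j => ?_⟩
    · induction k using Fin.lastCases with
      | last => simpa using hq
      | cast k => simpa using hQ k
    · simp [Fin.sum_univ_castSucc, hQsum, hsplit, add_comm]

end Chordal

section Gram

variable {σ : Type*}

/-- `none` indexes the constant monomial `1`, `some a` the variable `X a`. -/
noncomputable def affineExponent (i : Option σ) : σ →₀ ℕ := i.elim 0 (Finsupp.single · 1)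

lemma affineExponent_add_affineExponent_eq_iff {i j i' j' : Option σ} :
    affineExponent i + affineExponent j = affineExponent i' + affineExponent j' ↔
      i = i' ∧ j = j' ∨ i = j' ∧ j = i' := by
  refine ⟨fun h => ?_, by rintro (⟨rfl, rfl⟩ | ⟨rfl, rfl⟩) <;> simp [add_comm]⟩
  have hdeg := congrArg Finsupp.degree h
  cases i <;> cases j <;> cases i' <;> cases j' <;>
    simp [affineExponent, Finsupp.degree_single] at hdeg h ⊢ <;>
    simp_all [Finsupp.single_add_single_eq_single_add_single, Finsupp.single_left_inj, eq_comm]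

lemma affineExponent_injective : Function.Injective (affineExponent (σ := σ)) := by
  rintro (_ | a) (_ | b) h <;> simp_all [affineExponent, Finsupp.single_left_inj, eq_comm]

lemma exists_affineExponent_eq {d : σ →₀ ℕ} (hd : d.degree ≤ 1) : ∃ i, affineExponent i = d := by
  rcases Nat.le_one_iff_eq_zero_or_eq_one.mp hd with h0 | h1
  · exact ⟨none, ((Finsupp.degree_eq_zero_iff d).mp h0).symm⟩
  · obtain ⟨a, ha⟩ := Multiset.card_eq_one.mp ((Finsupp.card_toMultiset d).trans h1)
    classical
    exact ⟨some a, by rw [← Finsupp.toMultiset_toFinsupp d, ha]; simp [affineExponent]⟩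

lemma eq_sum_monomial_affineExponent {R : Type*} [CommSemiring R] [Fintype σ]
    {h : MvPolynomial σ R} (hdeg : h.totalDegree ≤ 1) :
    h = ∑ i, monomial (affineExponent i) (coeff (affineExponent i) h) := by
  classical
  ext d
  simp only [coeff_sum, coeff_monomial]
  by_cases hd : ∃ i, affineExponent i = d
  · obtain ⟨i, rfl⟩ := hd
    rw [Finset.sum_eq_single i (fun j _ hj => if_neg (affineExponent_injective.ne hj)) (by simp),
      if_pos rfl]
  · simp only [not_exists] at hd
    rw [Finset.sum_eq_zero fun i _ => if_neg (hd i)]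
    by_contra hc
    exact (exists_affineExponent_eq ((le_totalDegree (mem_support_iff.mpr hc)).trans hdeg)).elim
      fun i hi => hd i hi

variable [Fintype σ] {N : ℕ}

noncomputable def gramPoly (r : Option σ → EuclideanSpace ℝ (Fin N)) : MvPolynomial σ ℝ :=
  ∑ i, ∑ j, monomial (affineExponent i + affineExponent j) ⟪r i, r j⟫

lemma gramPoly_eq_sum_sq (r : Option σ → EuclideanSpace ℝ (Fin N)) :
    gramPoly r = ∑ t, (∑ i, monomial (affineExponent i) (r i t)) ^ 2 := by
  simp only [gramPoly, sq, Finset.sum_mul_sum, monomial_mul, PiLp.inner_apply,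
    RCLike.inner_apply, conj_trivial, map_sum]
  conv_rhs => rw [Finset.sum_comm]
  refine Finset.sum_congr rfl fun i _ => ?_
  conv_rhs => rw [Finset.sum_comm]
  simp only [mul_comm]

lemma totalDegree_gramPoly_le (r : Option σ → EuclideanSpace ℝ (Fin N)) :
    (gramPoly r).totalDegree ≤ 2 := by
  classical
  refine totalDegree_finsetSum_le fun i _ => totalDegree_finsetSum_le fun j _ => ?_
  refine (totalDegree_monomial_le _ _).trans ?_
  cases i <;> cases j <;> simp [affineExponent, Finsupp.sum_add_index]

lemma vars_gramPoly_subset {r : Option σ → EuclideanSpace ℝ (Fin N)} {s : Finset σ}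
    (hr : ∀ a ∉ s, r (some a) = 0) : (gramPoly r).vars ⊆ s := by
  classical
  have hsupp : ∀ i, r i ≠ 0 → (affineExponent i).support ⊆ s := by
    rintro (_ | a) hi
    · simp [affineExponent]
    · simpa [affineExponent] using not_imp_comm.mp (hr a) hi
  refine (vars_sum_subset _ _).trans <| Finset.biUnion_subset.mpr fun i _ =>
    (vars_sum_subset _ _).trans <| Finset.biUnion_subset.mpr fun j _ => ?_
  by_cases hc : ⟪r i, r j⟫ = 0
  · simp [hc]
  rw [vars_monomial hc]
  exact Finsupp.support_add.trans <| Finset.union_subset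
    (hsupp i fun h => hc (by simp [h])) (hsupp j fun h => hc (by simp [h]))

lemma coeff_gramPoly [DecidableEq σ] (r : Option σ → EuclideanSpace ℝ (Fin N)) (i j : Option σ) :
    coeff (affineExponent i + affineExponent j) (gramPoly r)
      = (if i = j then 1 else 2) * ⟪r i, r j⟫ := by
  simp only [gramPoly, coeff_sum, coeff_monomial, affineExponent_add_affineExponent_eq_iff]
  rw [← Fintype.sum_prod_type']
  have hmem : ∀ x : Option σ × Option σ, (x.1 = i ∧ x.2 = j ∨ x.1 = j ∧ x.2 = i) ↔
      x ∈ ({(i, j), (j, i)} : Finset _) := by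
    simp [Prod.ext_iff]
  simp only [hmem, Finset.sum_ite_mem, Finset.univ_inter]
  split_ifs with hij
  · simp [hij]
  · rw [Finset.sum_pair (by simp [Prod.ext_iff, hij]), real_inner_comm (r j)]
    ring

lemma sum_gramPoly {p : ℕ} {q : Fin p → Option σ → EuclideanSpace ℝ (Fin N)}
    {r : Option σ → EuclideanSpace ℝ (Fin N)}
    (h : ∀ i j, ∑ k, ⟪q k i, q k j⟫ = ⟪r i, r j⟫) : ∑ k, gramPoly (q k) = gramPoly r := by
  simp only [gramPoly, ← h, map_sum]
  rw [Finset.sum_comm]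
  exact Finset.sum_congr rfl fun i _ => Finset.sum_comm

lemma gramSupportedOn_of_mem_restrictSupport {p : ℕ} {I : Fin p → Finset σ}
    {r : Option σ → EuclideanSpace ℝ (Fin N)}
    (h : gramPoly r ∈ restrictSupport ℝ {d | ∃ k, d.support ⊆ I k}) :
    GramSupportedOn r fun k => {i | ∀ a ∈ i, a ∈ I k} := by
  classical
  intro i j hij
  have hd : affineExponent i + affineExponent j ∈ (gramPoly r).support := by
    rw [mem_support_iff, coeff_gramPoly]
    split_ifs <;> simp [hij]
  obtain ⟨k, hk⟩ := h hd
  refine ⟨k, fun a ha => hk ?_, fun a ha => hk ?_⟩ <;> simp_all [affineExponent]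

lemma isSOS_gramPoly {n : ℕ} (r : Option (Fin n) → EuclideanSpace ℝ (Fin N)) :
    IsSOS (gramPoly r) :=
  ⟨N, _, gramPoly_eq_sum_sq r⟩

lemma exists_gramPoly_eq {n : ℕ} {s : MvPolynomial (Fin n) ℝ} (hs : IsSOS s)
    (hdeg : s.totalDegree ≤ 2) :
    ∃ (N : ℕ) (r : Option (Fin n) → EuclideanSpace ℝ (Fin N)), s = gramPoly r := by
  obtain ⟨k, h, rfl⟩ := hs
  refine ⟨k, fun i => WithLp.toLp 2 fun t => coeff (affineExponent i) (h t), ?_⟩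
  rw [gramPoly_eq_sum_sq]
  refine Finset.sum_congr rfl fun t _ => ?_
  have := two_mul_totalDegree_le_totalDegree_sum_sq h t
  rw [← eq_sum_monomial_affineExponent (by omega)]

end Gram

lemma RunningIntersection.option {σ : Type*} {p : ℕ} {J : Fin p → Set σ}
    (h : RunningIntersection J) :
    RunningIntersection fun k => {i : Option σ | ∀ a ∈ i, a ∈ J k} := by
  intro k hk
  obtain ⟨s, hs, hsJ⟩ := h k hk
  exact ⟨s, hs, fun i hi ⟨l, hl, hil⟩ a ha => hsJ a (hi a ha) ⟨l, hl, hil a ha⟩⟩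

theorem IsSOS.exists_sum_eq_of_mem_restrictSupport {n p : ℕ} {I : Fin p → Finset (Fin n)}
    (hrip : RunningIntersection fun k => (I k : Set (Fin n))) {s : MvPolynomial (Fin n) ℝ}
    (hs : IsSOS s) (hdeg : s.totalDegree ≤ 2)
    (hsupp : s ∈ restrictSupport ℝ {d | ∃ k, d.support ⊆ I k}) :
    ∃ σ : Fin p → MvPolynomial (Fin n) ℝ,
      (∀ k, IsSOS (σ k) ∧ (σ k).totalDegree ≤ 2 ∧ (σ k).vars ⊆ I k) ∧ ∑ k, σ k = s := by
  obtain ⟨N, r, rfl⟩ := exists_gramPoly_eq hs hdeg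
  obtain ⟨q, hq, hsum⟩ :=
    (gramSupportedOn_of_mem_restrictSupport hsupp).exists_decomposition hrip.option
  exact ⟨fun k => gramPoly (q k), fun k => ⟨isSOS_gramPoly _, totalDegree_gramPoly_le _,
    vars_gramPoly_subset fun a ha => hq k (some a) (by simpa using ha)⟩, sum_gramPoly hsum⟩

section Relaxation

variable {n m p : ℕ}

def denseOrderOneBounds (f : MvPolynomial (Fin n) ℝ) (g : Fin m → MvPolynomial (Fin n) ℝ) :
    Set ℝ :=
  {φ | ∃ (σ₀ : MvPolynomial (Fin n) ℝ) (lam : Fin m → ℝ),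
    IsSOS σ₀ ∧ σ₀.totalDegree ≤ 2 ∧ (∀ i, 0 ≤ lam i) ∧ f - C φ = σ₀ + ∑ i, C (lam i) * g i}

def sparseOrderOneBounds (f : MvPolynomial (Fin n) ℝ) (g : Fin m → MvPolynomial (Fin n) ℝ)
    (I : Fin p → Finset (Fin n)) : Set ℝ :=
  {φ | ∃ (σ : Fin p → MvPolynomial (Fin n) ℝ) (lam : Fin m → ℝ),
    (∀ k, IsSOS (σ k) ∧ (σ k).totalDegree ≤ 2 ∧ (σ k).vars ⊆ I k) ∧ (∀ i, 0 ≤ lam i) ∧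
    f - C φ = ∑ k, σ k + ∑ i, C (lam i) * g i}

lemma sparseOrderOneBounds_subset_denseOrderOneBounds (f : MvPolynomial (Fin n) ℝ)
    (g : Fin m → MvPolynomial (Fin n) ℝ) (I : Fin p → Finset (Fin n)) :
    sparseOrderOneBounds f g I ⊆ denseOrderOneBounds f g := by
  rintro φ ⟨σ, lam, hσ, hlam, heq⟩
  exact ⟨∑ k, σ k, lam, IsSOS.sum _ fun k _ => (hσ k).1,
    totalDegree_finsetSum_le fun k _ => (hσ k).2.1, hlam, heq⟩

lemma denseOrderOneBounds_subset_sparseOrderOneBounds (hp : 0 < p)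
    {f : MvPolynomial (Fin n) ℝ} {g : Fin m → MvPolynomial (Fin n) ℝ} {I : Fin p → Finset (Fin n)}
    (hrip : RunningIntersection fun k => (I k : Set (Fin n)))
    (hfsupp : f ∈ restrictSupport ℝ {d | ∃ k, d.support ⊆ I k})
    (hgsupp : ∀ j, ∃ k, (g j).vars ⊆ I k) :
    denseOrderOneBounds f g ⊆ sparseOrderOneBounds f g I := by
  rintro φ ⟨s, lam, hs, hdeg, hlam, heq⟩
  have hsupp : s ∈ restrictSupport ℝ {d | ∃ k, d.support ⊆ I k} := by
    rw [eq_sub_of_add_eq heq.symm]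
    refine sub_mem (sub_mem hfsupp ?_) (sum_mem fun j _ => ?_)
    · rw [C_apply, monomial_mem_restrictSupport]
      exact Or.inl ⟨⟨0, hp⟩, by simp⟩
    · obtain ⟨k, hk⟩ := hgsupp j
      rw [C_mul']
      exact Submodule.smul_mem _ _ fun d hd => ⟨k, (support_subset_vars_of_mem_support hd).trans hk⟩
  obtain ⟨σ, hσ, hsum⟩ := hs.exists_sum_eq_of_mem_restrictSupport hrip hdeg hsupp
  exact ⟨σ, lam, hσ, hlam, by rw [heq, hsum]⟩

lemma isGreatest_denseOrderOneBounds_zero (g : Fin 0 → MvPolynomial (Fin n) ℝ) :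
    IsGreatest (denseOrderOneBounds 0 g) 0 := by
  refine ⟨⟨0, Fin.elim0, ⟨0, Fin.elim0, by simp⟩, by simp, fun i => i.elim0, by simp⟩, ?_⟩
  rintro φ ⟨s, lam, hs, -, -, heq⟩
  have := hs.eval_nonneg 0
  simp only [zero_sub, Finset.univ_eq_empty, Finset.sum_empty, add_zero] at heq
  simpa [← heq] using this

end Relaxation

theorem sparse_order_one_eq_dense_order_one_general {n m p : ℕ}
    (f : MvPolynomial (Fin n) ℝ) (g : Fin m → MvPolynomial (Fin n) ℝ)
    (I : Fin p → Finset (Fin n))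
    (hrip : ∀ k : Fin p, (k : ℕ) ≠ 0 → ∃ s : Fin p, (s : ℕ) < (k : ℕ) ∧
      ∀ i ∈ I k, (∃ l : Fin p, (l : ℕ) < (k : ℕ) ∧ i ∈ I l) → i ∈ I s)
    (hfsupp : ∀ d ∈ f.support, ∃ k, ∀ i ∈ d.support, i ∈ I k)
    (hgsupp : ∀ j, ∃ k, (g j).vars ⊆ I k) :
    sSup {φ : ℝ | ∃ (σ₀ : MvPolynomial (Fin n) ℝ) (lam : Fin m → ℝ),
        IsSOS σ₀ ∧ σ₀.totalDegree ≤ 2 ∧ (∀ i, 0 ≤ lam i) ∧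
        f - C φ = σ₀ + ∑ i, C (lam i) * g i}
      = sSup {φ : ℝ | ∃ (σ : Fin p → MvPolynomial (Fin n) ℝ) (lam : Fin m → ℝ),
        (∀ k, IsSOS (σ k) ∧ (σ k).totalDegree ≤ 2 ∧ (σ k).vars ⊆ I k) ∧
        (∀ i, 0 ≤ lam i) ∧
        f - C φ = ∑ k, σ k + ∑ i, C (lam i) * g i} := by
  change sSup (denseOrderOneBounds f g) = sSup (sparseOrderOneBounds f g I)
  rcases Nat.eq_zero_or_pos p with rfl | hp
  -- without cliques the two sets differ (`Iic 0` against `{0}`) but share the greatest element `0`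
  · obtain rfl : f = 0 := support_eq_empty.mp
      (Finset.eq_empty_of_forall_notMem fun d hd => (hfsupp d hd).choose.elim0)
    obtain rfl : m = 0 := Nat.eq_zero_of_not_pos fun hm => (hgsupp ⟨0, hm⟩).choose.elim0
    have hdense := isGreatest_denseOrderOneBounds_zero g
    have hsparse : IsGreatest (sparseOrderOneBounds 0 g I) 0 :=
      ⟨⟨Fin.elim0, Fin.elim0, fun k => k.elim0, fun i => i.elim0, by simp⟩,
        fun φ hφ => hdense.2 (sparseOrderOneBounds_subset_denseOrderOneBounds 0 g I hφ)⟩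
    rw [hdense.csSup_eq, hsparse.csSup_eq]
  · rw [(denseOrderOneBounds_subset_sparseOrderOneBounds hp hrip hfsupp hgsupp).antisymm
      (sparseOrderOneBounds_subset_denseOrderOneBounds f g I)]

/-- Proposition 2: for degree-2 data whose monomials and constraints are supported on
cliques `I₁,…,I_p` covering the variables and satisfying the running intersection
property, the supremum of `φ` admitting a dense order-1 certificate
`f − φ = σ₀ + Σ λᵢ·gᵢ` equals the supremum of `φ` admitting a sparse order-1
certificate `f − φ = Σ_k σ_k + Σ λᵢ·gᵢ` with each `σ_k` SOS of degree ≤ 2 supported on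
`I_k`: [OP₂-SH₁]* is equivalent to [OP₂-H₁]* and hence to the Lavaei–Low dual SDP. -/
theorem sparse_order_one_eq_dense_order_one {n m p : ℕ}
    (f : MvPolynomial (Fin n) ℝ) (g : Fin m → MvPolynomial (Fin n) ℝ)
    (hfdeg : f.totalDegree ≤ 2) (hgdeg : ∀ i, (g i).totalDegree ≤ 2)
    (I : Fin p → Finset (Fin n))
    (hcover : ∀ i : Fin n, ∃ k, i ∈ I k)
    (hrip : ∀ k : Fin p, (k : ℕ) ≠ 0 → ∃ s : Fin p, (s : ℕ) < (k : ℕ) ∧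
      ∀ i ∈ I k, (∃ l : Fin p, (l : ℕ) < (k : ℕ) ∧ i ∈ I l) → i ∈ I s)
    (hfsupp : ∀ d ∈ f.support, ∃ k, ∀ i ∈ d.support, i ∈ I k)
    (hgsupp : ∀ j, ∃ k, (g j).vars ⊆ I k) :
    sSup {φ : ℝ | ∃ (σ₀ : MvPolynomial (Fin n) ℝ) (lam : Fin m → ℝ),
        IsSOS σ₀ ∧ σ₀.totalDegree ≤ 2 ∧ (∀ i, 0 ≤ lam i) ∧
        f - C φ = σ₀ + ∑ i, C (lam i) * g i}
      = sSup {φ : ℝ | ∃ (σ : Fin p → MvPolynomial (Fin n) ℝ) (lam : Fin m → ℝ),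
        (∀ k, IsSOS (σ k) ∧ (σ k).totalDegree ≤ 2 ∧ (σ k).vars ⊆ I k) ∧
        (∀ i, 0 ≤ lam i) ∧
        f - C φ = ∑ k, σ k + ∑ i, C (lam i) * g i} :=
  sparse_order_one_eq_dense_order_one_general f g I hrip hfsupp hgsupp
end
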